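/- Let G=(V,E) be a graph on n vertices and k a nonnegative integer. Suppose the h₁ cost of every extreme 2-partition of V is larger than k. If there exists a non-trivial, non-extreme 2-partition π with h₁(π) ≤ k, then there exists a vertex s and a set F ⊆ V with |F| ≤ k/n such that F is a (k, (n−1)/2)-feasible flipping set for the 2-partition π₀ = (N_G[s], V∖N_G[s]). -/
import Mathlib


open Finset

variable {V : Type*} [Fintype V] [DecidableEq V]

/-- A 2-partition of the vertex set is given by an indicator `π : V → Bool`
(the two clusters are the preimages of `true` and `false`).
Two vertices `u ≠ v` are in conflict if they are in the same cluster but not adjacent,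
or in different clusters but adjacent. -/
def Conflict (G : SimpleGraph V) (π : V → Bool) (u v : V) : Prop :=
  u ≠ v ∧ ((π u = π v) ↔ ¬ G.Adj u v)

instance (G : SimpleGraph V) [DecidableRel G.Adj] (π : V → Bool) (u v : V) :
    Decidable (Conflict G π u v) := by
  unfold Conflict; infer_instance

/-- `C_π(v)` : the set of vertices in conflict with `v`. -/
def conflictSet (G : SimpleGraph V) [DecidableRel G.Adj] (π : V → Bool) (v : V) : Finset V :=
  Finset.univ.filter (fun u => Conflict G π v u)

/-- `c_π(v)` : the conflict number of `v`. -/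
def cNum (G : SimpleGraph V) [DecidableRel G.Adj] (π : V → Bool) (v : V) : ℕ :=
  (conflictSet G π v).card

/-- Flipping the set `F` : moving every vertex of `F` to the other cluster. -/
def flipSet (π : V → Bool) (F : Finset V) : V → Bool :=
  fun v => if v ∈ F then !(π v) else π v

/-- `h₁(π)` : the total conflict number. -/
def h1 (G : SimpleGraph V) [DecidableRel G.Adj] (π : V → Bool) : ℕ :=
  ∑ v, cNum G π v

/-- `h₂(π)` : the sum of squared conflict numbers. -/
def h2 (G : SimpleGraph V) [DecidableRel G.Adj] (π : V → Bool) : ℕ :=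
  ∑ v, (cNum G π v) ^ 2

set_option linter.unusedSectionVars false
section Aux
variable (G : SimpleGraph V) [DecidableRel G.Adj]

lemma conflict_comm (π : V → Bool) (u v : V) :
    Conflict G π u v ↔ Conflict G π v u := by
  unfold Conflict
  rw [ne_comm, eq_comm, G.adj_comm]

lemma cNum_cast (π : V → Bool) (v : V) :
    (cNum G π v : ℤ) = ∑ u, (if Conflict G π v u then (1:ℤ) else 0) := by
  rw [cNum, conflictSet, Finset.card_filter]
  push_cast
  rfl

lemma conflict_two (π π' : V → Bool) (u w : V) (h1 : π' u = π u) (h2 : π' w = π w) :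
    Conflict G π' u w ↔ Conflict G π u w := by
  unfold Conflict; rw [h1, h2]

lemma conflict_toggle (π π' : V → Bool) (u w : V) (hu : π' u = π u) (hw : π' w = !(π w)) :
    Conflict G π' u w ↔ (u ≠ w ∧ ¬((π u = π w) ↔ ¬ G.Adj u w)) := by
  unfold Conflict
  rw [hu, hw]
  have h : (π u = !(π w)) ↔ ¬(π u = π w) := by cases π u <;> cases π w <;> simp
  rw [h]
  tauto

lemma conflict_toggle' (π π' : V → Bool) (u w : V) (hu : π' u = !(π u)) (hw : π' w = π w) :
    Conflict G π' u w ↔ (u ≠ w ∧ ¬((π u = π w) ↔ ¬ G.Adj u w)) := by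
  unfold Conflict
  rw [hu, hw]
  have h : ((!(π u)) = π w) ↔ ¬(π u = π w) := by cases π u <;> cases π w <;> simp
  rw [h]
  tauto

lemma flip_single_eq (ρ : V → Bool) (v u : V) (h : u ≠ v) : flipSet ρ {v} u = ρ u := by
  simp [flipSet, h]

lemma flip_single_eq' (ρ : V → Bool) (v : V) : flipSet ρ {v} v = !(ρ v) := by
  simp [flipSet]

lemma cNum_flip_other (ρ : V → Bool) (v u : V) (h : u ≠ v) :
    (cNum G (flipSet ρ {v}) u : ℤ)
      = cNum G ρ u + 1 - 2 * (if Conflict G ρ u v then (1:ℤ) else 0) := by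
  set ρ' := flipSet ρ {v} with hρ'
  rw [cNum_cast, cNum_cast]
  have key : ∀ w, (if Conflict G ρ' u w then (1:ℤ) else 0)
      = Function.update (fun w => if Conflict G ρ u w then (1:ℤ) else 0) v
          (1 - (if Conflict G ρ u v then (1:ℤ) else 0)) w := by
    intro w
    by_cases hw : w = v
    · subst hw
      rw [Function.update_self]
      have := conflict_toggle G ρ ρ' u w (flip_single_eq ρ w u h) (flip_single_eq' ρ w)
      by_cases hc : Conflict G ρ u w
      · rw [if_pos hc, if_neg, sub_self]
        rw [this]
        exact fun hx => hx.2 hc.2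
      · rw [if_neg hc, if_pos, sub_zero]
        rw [this]
        exact ⟨h, fun hx => hc ⟨h, hx⟩⟩
    · rw [Function.update_of_ne hw]
      congr 1
      rw [eq_iff_iff]
      exact conflict_two G ρ ρ' u w (flip_single_eq ρ v u h) (flip_single_eq ρ v w hw)
  rw [Finset.sum_congr rfl fun w _ => key w,
    Finset.sum_update_of_mem (Finset.mem_univ v),
    Finset.sum_sdiff_eq_sub (Finset.singleton_subset_iff.mpr (Finset.mem_univ v)),
    Finset.sum_singleton]
  ring

lemma cNum_flip_self (ρ : V → Bool) (v : V) :
    (cNum G (flipSet ρ {v}) v : ℤ) = (Fintype.card V : ℤ) - 1 - cNum G ρ v := by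
  set ρ' := flipSet ρ {v} with hρ'
  rw [cNum_cast, cNum_cast]
  have key : ∀ w, (if Conflict G ρ' v w then (1:ℤ) else 0)
      = (1 - (if w = v then (1:ℤ) else 0)) - (if Conflict G ρ v w then (1:ℤ) else 0) := by
    intro w
    by_cases hw : w = v
    · rw [if_pos hw]
      have h1 : ¬ Conflict G ρ' v w := fun hx => hx.1 hw.symm
      have h2 : ¬ Conflict G ρ v w := fun hx => hx.1 hw.symm
      rw [if_neg h1, if_neg h2]
      ring
    · have hvw : v ≠ w := fun hx => hw hx.symm
      have htog := conflict_toggle' G ρ ρ' v w (flip_single_eq' ρ v) (flip_single_eq ρ v w hw)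
      rw [if_neg hw]
      by_cases hc : Conflict G ρ v w
      · rw [if_pos hc, if_neg]
        · ring
        · rw [htog]; exact fun hx => hx.2 hc.2
      · rw [if_neg hc, if_pos]
        · ring
        · rw [htog]; exact ⟨hvw, fun hx => hc ⟨hvw, hx⟩⟩
  rw [Finset.sum_congr rfl fun w _ => key w, Finset.sum_sub_distrib, Finset.sum_sub_distrib,
    Finset.sum_const, Finset.sum_ite_eq' Finset.univ v (fun _ => (1:ℤ)), if_pos (Finset.mem_univ v)]
  simp

lemma h1_cast (ρ : V → Bool) : (h1 G ρ : ℤ) = ∑ u, (cNum G ρ u : ℤ) := by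
  rw [h1]; push_cast; rfl

lemma h1_flip_single (ρ : V → Bool) (v : V) :
    (h1 G (flipSet ρ {v}) : ℤ) + 4 * cNum G ρ v
      = h1 G ρ + 2 * ((Fintype.card V : ℤ) - 1) := by
  rw [h1_cast, h1_cast, ← Finset.sum_erase_add _ _ (Finset.mem_univ v),
    ← Finset.sum_erase_add _ (fun u => (cNum G ρ u : ℤ)) (Finset.mem_univ v),
    cNum_flip_self]
  have hother : ∑ u ∈ Finset.univ.erase v, (cNum G (flipSet ρ {v}) u : ℤ)
      = ∑ u ∈ Finset.univ.erase v,
          ((cNum G ρ u : ℤ) + 1 - 2 * (if Conflict G ρ u v then (1:ℤ) else 0)) :=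
    Finset.sum_congr rfl fun u hu => cNum_flip_other G ρ v u (Finset.ne_of_mem_erase hu)
  rw [hother, Finset.sum_sub_distrib, Finset.sum_add_distrib, Finset.sum_const,
    ← Finset.mul_sum]
  have hcomm : ∀ u, (if Conflict G ρ u v then (1:ℤ) else 0)
      = (if Conflict G ρ v u then (1:ℤ) else 0) :=
    fun u => if_congr (conflict_comm G ρ u v) rfl rfl
  have hc : ∑ u ∈ Finset.univ.erase v, (if Conflict G ρ u v then (1:ℤ) else 0)
      = (cNum G ρ v : ℤ) := by
    rw [Finset.sum_congr rfl fun u _ => hcomm u, cNum_cast]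
    exact Finset.sum_erase _ (by simp [Conflict])
  have hcard : ((Finset.univ.erase v).card : ℤ) = (Fintype.card V : ℤ) - 1 := by
    rw [Finset.card_erase_of_mem (Finset.mem_univ v), Finset.card_univ]
    have : 1 ≤ Fintype.card V := Fintype.card_pos_iff.mpr ⟨v⟩
    push_cast [this]
    ring
  rw [hc]
  rw [nsmul_eq_mul, hcard]
  ring

lemma conflict_congr (π π' : V → Bool) (h : ∀ u, π' u = π u) (u v : V) :
    Conflict G π' u v ↔ Conflict G π u v := by
  unfold Conflict; rw [h u, h v]

lemma cNum_congr (π π' : V → Bool) (h : ∀ u, π' u = π u) (v : V) :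
    cNum G π' v = cNum G π v := by
  unfold cNum conflictSet
  congr 1
  apply Finset.filter_congr
  intro u _
  simp [conflict_congr G π π' h]

lemma cNum_not (π : V → Bool) (v : V) :
    cNum G (fun u => !(π u)) v = cNum G π v := by
  unfold cNum conflictSet
  congr 1
  apply Finset.filter_congr
  intro u _
  unfold Conflict
  simp

end Aux

/-- Lemma 7: if every extreme 2-partition has `h₁` cost larger than `k`,
and there exists a non-trivial non-extreme 2-partition `π` with `h₁(π) ≤ k`, then there is
a vertex `s` and a set `F` with `|F| ≤ k/n` which is a `(k, (n−1)/2)`-feasible flipping set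
for `π₀ = (N_G[s], V ∖ N_G[s])`. -/
theorem exists_feasible_flipping_set_h1 (G : SimpleGraph V) [DecidableRel G.Adj] (k : ℕ)
    (hext : ∀ σ : V → Bool,
      ((Finset.univ.filter (fun v => σ v = true)).card = 1 ∨
       (Finset.univ.filter (fun v => σ v = false)).card = 1) → k < h1 G σ)
    (π : V → Bool)
    (hnontriv : (Finset.univ.filter (fun v => π v = true)).Nonempty ∧
                (Finset.univ.filter (fun v => π v = false)).Nonempty)
    (hnonext : (Finset.univ.filter (fun v => π v = true)).card ≠ 1 ∧
               (Finset.univ.filter (fun v => π v = false)).card ≠ 1)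
    (hk : h1 G π ≤ k) :
    ∃ (s : V) (F : Finset V),
      (F.card : ℝ) ≤ (k : ℝ) / (Fintype.card V : ℝ) ∧
      (h1 G (flipSet (fun u => decide (u ∈ insert s (G.neighborFinset s))) F) : ℝ) ≤ (k : ℝ) ∧
      ∀ v : V,
        (cNum G (flipSet (fun u => decide (u ∈ insert s (G.neighborFinset s))) F) v : ℝ) ≤
          ((Fintype.card V : ℝ) - 1) / 2 := by
  classical
  have hVne : Nonempty V := ⟨hnontriv.1.choose⟩
  have hnpos : 0 < Fintype.card V := Fintype.card_pos
  -- the set of admissible partitions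
  set S : Finset (V → Bool) := Finset.univ.filter (fun σ =>
    h1 G σ ≤ k ∧ (Finset.univ.filter (fun v => σ v = true)).Nonempty ∧
      (Finset.univ.filter (fun v => σ v = false)).Nonempty) with hS
  have hπS : π ∈ S := by
    rw [hS, Finset.mem_filter]
    exact ⟨Finset.mem_univ _, hk, hnontriv.1, hnontriv.2⟩
  obtain ⟨ρ, hρS, hρmin⟩ := Finset.exists_min_image S (h1 G) ⟨π, hπS⟩
  rw [hS, Finset.mem_filter] at hρS
  obtain ⟨-, hρk, hρt, hρf⟩ := hρS
  -- ρ is non-extreme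
  have hne : ∀ b : Bool, (Finset.univ.filter (fun v => ρ v = b)).card ≠ 1 := by
    intro b hb
    have hlt : k < h1 G ρ := by
      apply hext ρ
      cases b
      · exact Or.inr hb
      · exact Or.inl hb
    omega
  -- all conflict numbers of ρ are small
  have hcb : ∀ v, 2 * cNum G ρ v ≤ Fintype.card V - 1 := by
    intro v
    by_contra hbig
    push_neg at hbig
    have h2c : Fintype.card V ≤ 2 * cNum G ρ v := by omega
    set ρ' := flipSet ρ {v} with hρ'
    have hdec : h1 G ρ' < h1 G ρ := by
      have key := h1_flip_single G ρ v
      rw [← hρ'] at key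
      have h2c' : (Fintype.card V : ℤ) ≤ 2 * cNum G ρ v := by exact_mod_cast h2c
      omega
    -- ρ' is nontrivial
    have hcard2 : 1 < (Finset.univ.filter (fun u => ρ u = ρ v)).card := by
      have hmem : v ∈ Finset.univ.filter (fun u => ρ u = ρ v) := by
        simp
      have h1le : 1 ≤ (Finset.univ.filter (fun u => ρ u = ρ v)).card :=
        Finset.card_pos.mpr ⟨v, hmem⟩
      have := hne (ρ v)
      omega
    obtain ⟨u, hu, huv⟩ := Finset.exists_mem_ne hcard2 v
    rw [Finset.mem_filter] at hu
    have hρ'u : ρ' u = ρ v := by rw [hρ', flip_single_eq ρ v u huv]; exact hu.2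
    have hρ'v : ρ' v = !(ρ v) := flip_single_eq' ρ v
    have hnt : ∀ b : Bool, (Finset.univ.filter (fun w => ρ' w = b)).Nonempty := by
      intro b
      by_cases hb : b = !(ρ v)
      · exact ⟨v, by simp [hρ'v, hb]⟩
      · have hb' : b = ρ v := by
          cases b <;> cases hbv : ρ v <;> simp_all
        exact ⟨u, by simp [hρ'u, hb']⟩
    have hρ'S : ρ' ∈ S := by
      rw [hS, Finset.mem_filter]
      exact ⟨Finset.mem_univ _, by omega, hnt true, hnt false⟩
    have := hρmin ρ' hρ'S
    omega
  -- pick s with minimal conflict number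
  obtain ⟨s, -, hs⟩ := Finset.exists_min_image Finset.univ (cNum G ρ) Finset.univ_nonempty
  have hns : Fintype.card V * cNum G ρ s ≤ k := by
    have hle : Finset.univ.card • cNum G ρ s ≤ ∑ v, cNum G ρ v :=
      Finset.card_nsmul_le_sum _ _ _ (fun x _ => hs x (Finset.mem_univ x))
    rw [Finset.card_univ, smul_eq_mul] at hle
    exact le_trans (le_trans hle (le_of_eq rfl)) hρk
  -- the normalized partition (agreeing with π₀ at s)
  set ρh : V → Bool := fun u => (ρ u == ρ s) with hρh
  have hρhs : ρh s = true := by simp [hρh]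
  have hcNum : ∀ v, cNum G ρh v = cNum G ρ v := by
    intro v
    by_cases hb : ρ s = true
    · exact cNum_congr G ρ ρh (fun u => by simp [hρh, hb]) v
    · have hb' : ρ s = false := by simp_all
      rw [show ρh = (fun u => !(ρ u)) from funext fun u => by simp [hρh, hb'], cNum_not]
  have hh1 : h1 G ρh = h1 G ρ := by
    unfold h1
    exact Finset.sum_congr rfl fun v _ => by rw [hcNum v]
  set π₀ : V → Bool := fun u => decide (u ∈ insert s (G.neighborFinset s)) with hπ₀
  have hπ₀s : π₀ s = true := by simp [hπ₀]
  set F : Finset V := Finset.univ.filter (fun u => π₀ u ≠ ρh u) with hF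
  have hflip : flipSet π₀ F = ρh := by
    funext u
    by_cases h : π₀ u = ρh u
    · simp [flipSet, hF, h]
    · have : (!(π₀ u)) = ρh u := by
        cases h1 : π₀ u <;> cases h2 : ρh u <;> simp_all
      simp [flipSet, hF, h, this]
  have hFsub : F ⊆ conflictSet G ρh s := by
    intro u hu
    rw [hF, Finset.mem_filter] at hu
    have hu2 := hu.2
    have hus : u ≠ s := by
      rintro rfl
      rw [hπ₀s, hρhs] at hu2
      exact hu2 rfl
    have hadj : π₀ u = decide (G.Adj s u) := by
      simp only [hπ₀, decide_eq_decide, Finset.mem_insert, SimpleGraph.mem_neighborFinset]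
      constructor
      · rintro (rfl | h)
        · exact absurd rfl hus
        · exact h
      · exact Or.inr
    rw [conflictSet, Finset.mem_filter]
    refine ⟨Finset.mem_univ _, fun h => hus h.symm, ?_⟩
    by_cases hA : G.Adj s u
    · have hπ₀u : π₀ u = true := by rw [hadj]; simp [hA]
      have hρhu : ρh u = false := by
        cases h2 : ρh u
        · rfl
        · rw [hπ₀u, h2] at hu2; exact absurd rfl hu2
      rw [hρhs, hρhu]
      simp [hA]
    · have hπ₀u : π₀ u = false := by rw [hadj]; simp [hA]
      have hρhu : ρh u = true := by
        cases h2 : ρh u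
        · rw [hπ₀u, h2] at hu2; exact absurd rfl hu2
        · rfl
      rw [hρhs, hρhu]
      simp [hA]
  have hFcard : F.card ≤ cNum G ρ s := by
    rw [← hcNum s]
    exact Finset.card_le_card hFsub
  refine ⟨s, F, ?_, ?_, ?_⟩
  · rw [le_div_iff₀ (by exact_mod_cast hnpos)]
    have : F.card * Fintype.card V ≤ k := by
      calc F.card * Fintype.card V ≤ cNum G ρ s * Fintype.card V :=
            Nat.mul_le_mul_right _ hFcard
        _ = Fintype.card V * cNum G ρ s := Nat.mul_comm _ _
        _ ≤ k := hns
    exact_mod_cast this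
  · rw [hflip, hh1]
    exact_mod_cast hρk
  · intro v
    rw [hflip, hcNum v]
    rw [le_div_iff₀ (by norm_num : (0:ℝ) < 2)]
    have h2c := hcb v
    have h1n : 1 ≤ Fintype.card V := hnpos
    have : ((2 * cNum G ρ v : ℕ) : ℝ) ≤ ((Fintype.card V - 1 : ℕ) : ℝ) := Nat.cast_le.mpr h2c
    rw [Nat.cast_sub h1n] at this
    push_cast at this ⊢
    linarith
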